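/- Let A, A' be real random variables and X, X' be ℝ^d-valued random variables, all with finite moments of every order, defined on a probability space. For μ = law-weighted measure with ⟨μ^{X,A}, f⟩ = 𝔼[A f(X)], the Wasserstein-type distance satisfies ρ(μ^{X,A}, μ^{X',A'}) ≤ (𝔼|A−A'|^q)^{1/q} (𝔼(1+|X|)^{q'})^{1/q'} + (𝔼|A'|^{p'})^{1/p'} (𝔼|X−X'|^p)^{1/p}, for any conjugate pairs (q,q') and (p,p'). -/

import Mathlib

open MeasureTheory

/-- Estimate for the Wasserstein-type distance between two weighted measures
`⟨μ^{X,A}, f⟩ = 𝔼[A f(X)]`: for every test function `f` with `|f(x)| ≤ 1 + |x|` and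
`Lip(f) ≤ 1`,
`|𝔼[A f(X)] − 𝔼[A' f(X')]| ≤ (𝔼|A−A'|^q)^{1/q}(𝔼(1+|X|)^{q'})^{1/q'}
  + (𝔼|A'|^{p'})^{1/p'}(𝔼|X−X'|^p)^{1/p}`,
for any conjugate pairs `(q,q')` and `(p,p')`. -/
theorem stmt_8 {d : ℕ} {Ω : Type*} [MeasurableSpace Ω] (P : Measure Ω)
    [IsProbabilityMeasure P]
    (A A' : Ω → ℝ) (X X' : Ω → EuclideanSpace ℝ (Fin d))
    (hA : ∀ r : ℝ, 1 ≤ r → MemLp A (ENNReal.ofReal r) P)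
    (hA' : ∀ r : ℝ, 1 ≤ r → MemLp A' (ENNReal.ofReal r) P)
    (hX : ∀ r : ℝ, 1 ≤ r → MemLp X (ENNReal.ofReal r) P)
    (hX' : ∀ r : ℝ, 1 ≤ r → MemLp X' (ENNReal.ofReal r) P)
    (q q' p p' : ℝ) (hq : 1 < q) (hqq' : 1 / q + 1 / q' = 1)
    (hp : 1 < p) (hpp' : 1 / p + 1 / p' = 1) :
    ∀ f : EuclideanSpace ℝ (Fin d) → ℝ,
      (∀ x, |f x| ≤ 1 + ‖x‖) → LipschitzWith 1 f →
      |(∫ ω, A ω * f (X ω) ∂P) - ∫ ω, A' ω * f (X' ω) ∂P| ≤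
        (∫ ω, |A ω - A' ω| ^ q ∂P) ^ (1 / q) *
          (∫ ω, (1 + ‖X ω‖) ^ q' ∂P) ^ (1 / q') +
        (∫ ω, |A' ω| ^ p' ∂P) ^ (1 / p') *
          (∫ ω, ‖X ω - X' ω‖ ^ p ∂P) ^ (1 / p) := by
  intro f hfb hLip
  have hqconj : Real.HolderConjugate q q' := Real.holderConjugate_iff.mpr ⟨hq, by rw [one_div, one_div] at hqq'; exact hqq'⟩
  have hpconj : Real.HolderConjugate p p' := Real.holderConjugate_iff.mpr ⟨hp, by rw [one_div, one_div] at hpp'; exact hpp'⟩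
  have hq' : (1:ℝ) ≤ q' := hqconj.symm.lt.le
  have hp' : (1:ℝ) ≤ p' := hpconj.symm.lt.le
  have h2 : (1:ℝ) ≤ 2 := one_le_two
  have hfc : Continuous f := hLip.continuous
  have hXm : AEStronglyMeasurable X P := (hX 1 le_rfl).1
  have hX'm : AEStronglyMeasurable X' P := (hX' 1 le_rfl).1
  have hfX : AEStronglyMeasurable (fun ω => f (X ω)) P :=
    hfc.comp_aestronglyMeasurable hXm
  have hfX' : AEStronglyMeasurable (fun ω => f (X' ω)) P :=
    hfc.comp_aestronglyMeasurable hX'm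
  -- auxiliary MemLp facts
  have honeX : ∀ r : ℝ, 1 ≤ r → MemLp (fun ω => 1 + ‖X ω‖) (ENNReal.ofReal r) P :=
    fun r hr => (memLp_const (1:ℝ)).add (hX r hr).norm
  have hfXp : ∀ r : ℝ, 1 ≤ r → MemLp (fun ω => f (X ω)) (ENNReal.ofReal r) P := by
    intro r hr
    refine (honeX r hr).of_le hfX (Filter.Eventually.of_forall fun ω => ?_)
    have h1 : (0:ℝ) ≤ 1 + ‖X ω‖ := by positivity
    simpa [Real.norm_eq_abs, abs_of_nonneg h1] using hfb (X ω)
  have honeX' : ∀ r : ℝ, 1 ≤ r → MemLp (fun ω => 1 + ‖X' ω‖) (ENNReal.ofReal r) P :=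
    fun r hr => (memLp_const (1:ℝ)).add (hX' r hr).norm
  have hfX'p : ∀ r : ℝ, 1 ≤ r → MemLp (fun ω => f (X' ω)) (ENNReal.ofReal r) P := by
    intro r hr
    refine (honeX' r hr).of_le hfX' (Filter.Eventually.of_forall fun ω => ?_)
    have h1 : (0:ℝ) ≤ 1 + ‖X' ω‖ := by positivity
    simpa [Real.norm_eq_abs, abs_of_nonneg h1] using hfb (X' ω)
  have h122 : (1:ENNReal) / 1 = 1 / ENNReal.ofReal 2 + 1 / ENNReal.ofReal 2 := by
    have : ENNReal.ofReal 2 = 2 := by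
      rw [ENNReal.ofReal_ofNat]
    rw [this, one_div, one_div, ENNReal.inv_two_add_inv_two]; simp
  -- integrability of products
  have hmul : ∀ (g h : Ω → ℝ), MemLp g (ENNReal.ofReal 2) P →
      MemLp h (ENNReal.ofReal 2) P → Integrable (fun ω => g ω * h ω) P := by
    intro g h hg hh
    have := hh.smul (E := ℝ) (φ := g) hg (r := 1) (hpqr := ⟨by simpa only [one_div] using h122.symm⟩)
    rw [memLp_one_iff_integrable] at this
    exact this
  have hint1 : Integrable (fun ω => A ω * f (X ω)) P :=
    hmul _ _ (hA 2 h2) (hfXp 2 h2)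
  have hint2 : Integrable (fun ω => A' ω * f (X' ω)) P :=
    hmul _ _ (hA' 2 h2) (hfX'p 2 h2)
  have hg1 : Integrable (fun ω => |A ω - A' ω| * (1 + ‖X ω‖)) P :=
    hmul _ _ ((hA 2 h2).sub (hA' 2 h2)).abs (honeX 2 h2)
  have hg2 : Integrable (fun ω => |A' ω| * ‖X ω - X' ω‖) P :=
    hmul _ _ (hA' 2 h2).abs ((hX 2 h2).sub (hX' 2 h2)).norm
  -- pointwise bound
  have hptw : ∀ ω, |A ω * f (X ω) - A' ω * f (X' ω)| ≤
      |A ω - A' ω| * (1 + ‖X ω‖) + |A' ω| * ‖X ω - X' ω‖ := by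
    intro ω
    have key : A ω * f (X ω) - A' ω * f (X' ω)
        = (A ω - A' ω) * f (X ω) + A' ω * (f (X ω) - f (X' ω)) := by ring
    have hlip : |f (X ω) - f (X' ω)| ≤ ‖X ω - X' ω‖ := by
      have := hLip.dist_le_mul (X ω) (X' ω)
      simpa [Real.dist_eq, dist_eq_norm] using this
    calc |A ω * f (X ω) - A' ω * f (X' ω)|
        ≤ |(A ω - A' ω) * f (X ω)| + |A' ω * (f (X ω) - f (X' ω))| := by
          rw [key]; exact abs_add_le _ _
      _ ≤ |A ω - A' ω| * (1 + ‖X ω‖) + |A' ω| * ‖X ω - X' ω‖ := by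
          rw [abs_mul, abs_mul]
          exact add_le_add (mul_le_mul_of_nonneg_left (hfb (X ω)) (abs_nonneg _))
            (mul_le_mul_of_nonneg_left hlip (abs_nonneg _))
  -- main chain
  calc |(∫ ω, A ω * f (X ω) ∂P) - ∫ ω, A' ω * f (X' ω) ∂P|
      = |∫ ω, (A ω * f (X ω) - A' ω * f (X' ω)) ∂P| := by
        rw [integral_sub hint1 hint2]
    _ ≤ ∫ ω, |A ω * f (X ω) - A' ω * f (X' ω)| ∂P := by
        simpa [Real.norm_eq_abs] using
          norm_integral_le_integral_norm (fun ω => A ω * f (X ω) - A' ω * f (X' ω)) (μ := P)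
    _ ≤ ∫ ω, (|A ω - A' ω| * (1 + ‖X ω‖) + |A' ω| * ‖X ω - X' ω‖) ∂P := by
        refine integral_mono (hint1.sub hint2).abs (hg1.add hg2) fun ω => hptw ω
    _ = (∫ ω, |A ω - A' ω| * (1 + ‖X ω‖) ∂P) + ∫ ω, |A' ω| * ‖X ω - X' ω‖ ∂P := by
        exact integral_add hg1 hg2
    _ ≤ (∫ ω, |A ω - A' ω| ^ q ∂P) ^ (1 / q) * (∫ ω, (1 + ‖X ω‖) ^ q' ∂P) ^ (1 / q') +
        (∫ ω, |A' ω| ^ p' ∂P) ^ (1 / p') * (∫ ω, ‖X ω - X' ω‖ ^ p ∂P) ^ (1 / p) := by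
        gcongr
        · exact integral_mul_le_Lp_mul_Lq_of_nonneg hqconj
            (Filter.Eventually.of_forall fun ω => abs_nonneg _)
            (Filter.Eventually.of_forall fun ω => by positivity)
            ((hA q hq.le).sub (hA' q hq.le)).abs (honeX q' hq')
        · exact integral_mul_le_Lp_mul_Lq_of_nonneg hpconj.symm
            (Filter.Eventually.of_forall fun ω => abs_nonneg _)
            (Filter.Eventually.of_forall fun ω => norm_nonneg _)
            (hA' p' hp').abs ((hX p hp.le).sub (hX' p hp.le)).norm
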